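/- For any 1 ≤ i ≤ n−1 one has the recursive formula α_i = min{ (R_{i+1}−R_i)/2 + e, R_{i+1}−R_i+d_i, R_{i+1}−R_i+α_{i−1}, R_{i+1}−R_i+α_{i+1} }, where the term R_{i+1}−R_i+α_{i−1} is omitted when i = 1 and the term R_{i+1}−R_i+α_{i+1} is omitted when i = n−1. -/

import Mathlib

/-!
Combinatorial setting abstracting a good BONG over a dyadic local field.
`R : ℕ → ℤ` are the orders `R_i = ord a_i` (indices `1,…,n` used),
`d : ℕ → EReal` are the values `d_j = d(-a_j a_{j+1}) ∈ ℕ ∪ {∞}`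
(the allowed values are encoded in condition (G3) below).
-/

/-- The term `(R_{i+1} - R_i)/2 + e` appearing in the definition of `α_i`. -/
noncomputable def halfTerm (e : ℤ) (R : ℕ → ℤ) (i : ℕ) : EReal :=
  (((R (i + 1) - R i : ℝ) / 2 + (e : ℝ) : ℝ) : EReal)

/-- The set whose minimum defines `α_i`. -/
noncomputable def alphaSet (e : ℤ) (n : ℕ) (R : ℕ → ℤ) (d : ℕ → EReal) (i : ℕ) :
    Set EReal :=
  {halfTerm e R i}
    ∪ {x | ∃ j, 1 ≤ j ∧ j ≤ i ∧ x = ((R (i + 1) - R j : ℝ) : EReal) + d j}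
    ∪ {x | ∃ j, i ≤ j ∧ j + 1 ≤ n ∧ x = ((R (j + 1) - R i : ℝ) : EReal) + d j}

/-- The invariant `α_i = α_i(L)`, for `1 ≤ i ≤ n - 1`. -/
noncomputable def alpha (e : ℤ) (n : ℕ) (R : ℕ → ℤ) (d : ℕ → EReal) (i : ℕ) : EReal :=
  sInf (alphaSet e n R d i)

/-- `α'_m(k,l)`: the `α`-invariant of the truncated data `R_k,…,R_l`, `d_k,…,d_{l-1}`. -/
noncomputable def alphaT (e : ℤ) (R : ℕ → ℤ) (d : ℕ → EReal) (k l m : ℕ) : EReal :=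
  alpha e (l - k + 1) (fun j => R (k + j - 1)) (fun j => d (k + j - 1)) m

/-- Conditions (G1)-(G4) on the data `(e, n, R, d)`, abstracting a good BONG. -/
structure GoodBONG (e : ℤ) (n : ℕ) (R : ℕ → ℤ) (d : ℕ → EReal) : Prop where
  he : 1 ≤ e
  hn : 2 ≤ n
  g1 : ∀ i, 1 ≤ i → i + 2 ≤ n → R i ≤ R (i + 2)
  g2a : ∀ j, 1 ≤ j → j + 1 ≤ n → 0 ≤ R (j + 1) - R j + 2 * e
  g2b : ∀ j, 1 ≤ j → j + 1 ≤ n → 0 ≤ ((R (j + 1) - R j : ℝ) : EReal) + d j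
  g3 : ∀ j, 1 ≤ j → j + 1 ≤ n →
    d j = 0 ∨ (∃ m : ℕ, Odd m ∧ (m : ℤ) ≤ 2 * e - 1 ∧ d j = ((m : ℝ) : EReal)) ∨
      d j = (((2 * e : ℤ) : ℝ) : EReal) ∨ d j = ⊤
  g4odd : ∀ j, 1 ≤ j → j + 1 ≤ n → Odd (R (j + 1) - R j) →
    0 < R (j + 1) - R j ∧ d j = 0
  g4even : ∀ j, 1 ≤ j → j + 1 ≤ n → Even (R (j + 1) - R j) → 0 < d j

/-!
Write `c = R_{i+1} - R_i`. Shifting a term of `α_{i-1}` or `α_{i+1}` by `c` telescopes: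
`c + (R_i - R_j + d_j) = R_{i+1} - R_j + d_j` and `c + (R_{j+1} - R_{i+1} + d_j) = R_{j+1} - R_i + d_j`.
So every term of `α_i` other than the half-term and `R_{i+1} - R_i + d_i` is a shifted term of
`α_{i-1}` or `α_{i+1}`, giving `≥`. Conversely each shifted term of `α_{i±1}` equals or dominates a
term of `α_i`; the terms that do not telescope are dominated because `R_{i-1} ≤ R_{i+1}` and
`R_i ≤ R_{i+2}` (G1).
-/

theorem EReal.coe_add_coe_add (a b : ℝ) (t : EReal) :
    (a : EReal) + ((b : EReal) + t) = ((a + b : ℝ) : EReal) + t := by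
  rw [← add_assoc, ← EReal.coe_add]

section Alpha

variable {e : ℤ} {n : ℕ} {R : ℕ → ℤ} {d : ℕ → EReal} {i j : ℕ}

theorem halfTerm_mem_alphaSet : halfTerm e R i ∈ alphaSet e n R d i :=
  Or.inl (Or.inl rfl)

theorem mem_alphaSet_left (hj : 1 ≤ j) (hji : j ≤ i) :
    ((R (i + 1) - R j : ℝ) : EReal) + d j ∈ alphaSet e n R d i :=
  Or.inl (Or.inr ⟨j, hj, hji, rfl⟩)

theorem mem_alphaSet_right (hij : i ≤ j) (hjn : j + 1 ≤ n) :
    ((R (j + 1) - R i : ℝ) : EReal) + d j ∈ alphaSet e n R d i :=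
  Or.inr ⟨j, hij, hjn, rfl⟩

theorem alphaSet_finite : (alphaSet e n R d i).Finite := by
  refine ((Set.finite_singleton _).union ?_).union ?_
  · refine ((Set.finite_Icc 1 i).image fun j => ((R (i + 1) - R j : ℝ) : EReal) + d j).subset ?_
    rintro x ⟨j, hj, hji, rfl⟩
    exact ⟨j, ⟨hj, hji⟩, rfl⟩
  · refine ((Set.finite_Icc i n).image fun j => ((R (j + 1) - R i : ℝ) : EReal) + d j).subset ?_
    rintro x ⟨j, hij, hjn, rfl⟩
    exact ⟨j, ⟨hij, by omega⟩, rfl⟩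

theorem alpha_mem_alphaSet : alpha e n R d i ∈ alphaSet e n R d i :=
  Set.Nonempty.csInf_mem ⟨_, halfTerm_mem_alphaSet⟩ alphaSet_finite

theorem alpha_le_coe_add_of_mem {x y : ℝ} {t : EReal} (hx : (x : EReal) + t ∈ alphaSet e n R d i)
    (hxy : x ≤ y) : alpha e n R d i ≤ (y : EReal) + t :=
  sInf_le_of_le hx (by gcongr)

theorem coe_add_alpha_le_coe_add {c x y : ℝ} {t : EReal}
    (hx : (x : EReal) + t ∈ alphaSet e n R d i) (hxy : c + x = y) :
    (c : EReal) + alpha e n R d i ≤ (y : EReal) + t := by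
  rw [← hxy, ← EReal.coe_add_coe_add]
  gcongr
  exact sInf_le hx

theorem halfTerm_le_coe_add_halfTerm_succ (hR : R i ≤ R (i + 2)) :
    halfTerm e R i ≤ ((R (i + 1) - R i : ℝ) : EReal) + halfTerm e R (i + 1) := by
  rw [halfTerm, halfTerm, ← EReal.coe_add, EReal.coe_le_coe_iff, show i + 1 + 1 = i + 2 from rfl]
  have : (R i : ℝ) ≤ R (i + 2) := by exact_mod_cast hR
  linarith

theorem halfTerm_succ_le_coe_add_halfTerm (hR : R i ≤ R (i + 2)) :
    halfTerm e R (i + 1) ≤ ((R (i + 2) - R (i + 1) : ℝ) : EReal) + halfTerm e R i := by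
  rw [halfTerm, halfTerm, ← EReal.coe_add, EReal.coe_le_coe_iff, show i + 1 + 1 = i + 2 from rfl]
  have : (R i : ℝ) ≤ R (i + 2) := by exact_mod_cast hR
  linarith

theorem alpha_le_coe_add_alpha_succ (hin : i + 2 ≤ n) (hR : R i ≤ R (i + 2)) :
    alpha e n R d i ≤ ((R (i + 1) - R i : ℝ) : EReal) + alpha e n R d (i + 1) := by
  have hR' : (R i : ℝ) ≤ R (i + 2) := by exact_mod_cast hR
  rcases alpha_mem_alphaSet (e := e) (n := n) (R := R) (d := d) (i := i + 1) with
    ((hm | ⟨j, hj, hji, hm⟩) | ⟨j, hij, hjn, hm⟩) <;> rw [hm]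
  · exact sInf_le_of_le halfTerm_mem_alphaSet (halfTerm_le_coe_add_halfTerm_succ hR)
  · rw [EReal.coe_add_coe_add]
    rcases hji.lt_or_eq with hji | rfl
    · exact alpha_le_coe_add_of_mem (mem_alphaSet_left hj (by omega)) (by linarith)
    · exact alpha_le_coe_add_of_mem (mem_alphaSet_right (Nat.le_succ i) hin) (by linarith)
  · rw [EReal.coe_add_coe_add]
    exact alpha_le_coe_add_of_mem (mem_alphaSet_right (by omega) hjn) (by linarith)

theorem alpha_succ_le_coe_add_alpha (hi : 1 ≤ i) (hR : R i ≤ R (i + 2)) :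
    alpha e n R d (i + 1) ≤ ((R (i + 2) - R (i + 1) : ℝ) : EReal) + alpha e n R d i := by
  have hR' : (R i : ℝ) ≤ R (i + 2) := by exact_mod_cast hR
  rcases alpha_mem_alphaSet (e := e) (n := n) (R := R) (d := d) (i := i) with
    ((hm | ⟨j, hj, hji, hm⟩) | ⟨j, hij, hjn, hm⟩) <;> rw [hm]
  · exact sInf_le_of_le halfTerm_mem_alphaSet (halfTerm_succ_le_coe_add_halfTerm hR)
  · rw [EReal.coe_add_coe_add]
    exact alpha_le_coe_add_of_mem (mem_alphaSet_left hj (by omega)) (by linarith)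
  · rw [EReal.coe_add_coe_add]
    rcases hij.lt_or_eq with hij | rfl
    · exact alpha_le_coe_add_of_mem (mem_alphaSet_right hij hjn) (by linarith)
    · exact alpha_le_coe_add_of_mem (mem_alphaSet_left hi (Nat.le_succ i)) (by linarith)

variable (e n R d i) in
noncomputable def alphaRecSet : Set EReal :=
  {halfTerm e R i, ((R (i + 1) - R i : ℝ) : EReal) + d i}
    ∪ {x | 2 ≤ i ∧ x = ((R (i + 1) - R i : ℝ) : EReal) + alpha e n R d (i - 1)}
    ∪ {x | i + 2 ≤ n ∧ x = ((R (i + 1) - R i : ℝ) : EReal) + alpha e n R d (i + 1)}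

theorem alpha_le_sInf_alphaRecSet (hR : ∀ k, 1 ≤ k → k + 2 ≤ n → R k ≤ R (k + 2))
    (hi : 1 ≤ i) (hin : i + 1 ≤ n) : alpha e n R d i ≤ sInf (alphaRecSet e n R d i) := by
  refine le_sInf ?_
  rintro x (((rfl | rfl) | ⟨h2i, rfl⟩) | ⟨h2n, rfl⟩)
  · exact sInf_le halfTerm_mem_alphaSet
  · exact sInf_le (mem_alphaSet_right le_rfl hin)
  · obtain ⟨k, rfl⟩ : ∃ k, i = k + 1 := ⟨i - 1, by omega⟩
    rw [Nat.add_sub_cancel]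
    exact alpha_succ_le_coe_add_alpha (by omega) (hR k (by omega) hin)
  · exact alpha_le_coe_add_alpha_succ h2n (hR i hi h2n)

theorem sInf_alphaRecSet_le_alpha : sInf (alphaRecSet e n R d i) ≤ alpha e n R d i := by
  have hdi : sInf (alphaRecSet e n R d i) ≤ ((R (i + 1) - R i : ℝ) : EReal) + d i :=
    sInf_le (Or.inl (Or.inl (Set.mem_insert_of_mem _ rfl)))
  refine le_sInf ?_
  rintro x ((rfl | ⟨j, hj, hji, rfl⟩) | ⟨j, hij, hjn, rfl⟩)
  · exact sInf_le (Or.inl (Or.inl (Set.mem_insert _ _)))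
  · rcases hji.lt_or_eq with hji | rfl
    · obtain ⟨k, rfl⟩ : ∃ k, i = k + 1 := ⟨i - 1, by omega⟩
      refine sInf_le_of_le (Or.inl (Or.inr ⟨by omega, rfl⟩)) ?_
      rw [Nat.add_sub_cancel]
      exact coe_add_alpha_le_coe_add (mem_alphaSet_left hj (Nat.le_of_lt_succ hji)) (by ring)
    · exact hdi
  · rcases hij.lt_or_eq with hij | rfl
    · exact sInf_le_of_le (Or.inr ⟨by omega, rfl⟩)
        (coe_add_alpha_le_coe_add (mem_alphaSet_right hij hjn) (by ring))
    · exact hdi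

end Alpha

/-- the recursive formula
`α_i = min{(R_{i+1}-R_i)/2+e, R_{i+1}-R_i+d_i, R_{i+1}-R_i+α_{i-1}, R_{i+1}-R_i+α_{i+1}}`,
where the third term is omitted when `i = 1` and the fourth when `i = n-1`. -/
theorem stmt7 (e : ℤ) (n : ℕ) (R : ℕ → ℤ) (d : ℕ → EReal)
    (h : GoodBONG e n R d) (i : ℕ) (hi : 1 ≤ i) (hin : i + 1 ≤ n) :
    alpha e n R d i =
      sInf ({halfTerm e R i, ((R (i + 1) - R i : ℝ) : EReal) + d i}
        ∪ {x | 2 ≤ i ∧ x = ((R (i + 1) - R i : ℝ) : EReal) + alpha e n R d (i - 1)}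
        ∪ {x | i + 2 ≤ n ∧ x = ((R (i + 1) - R i : ℝ) : EReal) + alpha e n R d (i + 1)}) :=
  le_antisymm (alpha_le_sInf_alphaRecSet h.g1 hi hin) sInf_alphaRecSet_le_alpha
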